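/- A subgroup of finite exponent of an abelian group of cofinite type is finite. -/

import Mathlib

/-!
Since `m • s = 0` on `S`, the injection `j` maps `S` into the `m`-torsion of
`(ℚ/ℤ)ⁿ × F`, which is finite because the `m`-torsion of `ℚ/ℤ` is (it is cyclic of order `m`).
-/

section Torsion

variable {m : ℕ}

theorem Set.Finite.setOf_nsmul_eq_zero_prod {G H : Type*} [AddMonoid G] [AddMonoid H]
    (hG : {g : G | m • g = 0}.Finite) (hH : {h : H | m • h = 0}.Finite) :
    {x : G × H | m • x = 0}.Finite :=
  (hG.prod hH).subset fun _ hx => ⟨congrArg Prod.fst hx, congrArg Prod.snd hx⟩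

theorem Set.Finite.setOf_nsmul_eq_zero_pi {ι : Type*} [Finite ι] {G : ι → Type*}
    [∀ i, AddMonoid (G i)] (h : ∀ i, {g : G i | m • g = 0}.Finite) :
    {x : ∀ i, G i | m • x = 0}.Finite :=
  (Set.Finite.pi h).subset fun _ hx i _ => congrFun hx i

end Torsion

/-- A subgroup of finite exponent of an abelian group of cofinite type is finite. -/
theorem finite_subgroup_of_finiteExponent_of_cofiniteType
    {A : Type*} [AddCommGroup A]
    (n : ℕ) (F : Type*) [AddCommGroup F] [Finite F]
    (j : A →+ (Fin n → AddCircle (1 : ℚ)) × F) (hj : Function.Injective j)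
    (S : AddSubgroup A) (m : ℕ) (hm : 0 < m) (hS : ∀ s ∈ S, m • s = 0) :
    Finite S := by
  have hTorsion : {x : (Fin n → AddCircle (1 : ℚ)) × F | m • x = 0}.Finite :=
    .setOf_nsmul_eq_zero_prod (.setOf_nsmul_eq_zero_pi fun _ => AddCircle.finite_torsion 1 hm)
      (Set.toFinite _)
  have hImage : j '' S ⊆ {x | m • x = 0} := by
    rintro _ ⟨s, hs, rfl⟩
    simp only [Set.mem_ofPred_eq, ← map_nsmul, hS s hs, map_zero]
  exact ((hTorsion.subset hImage).of_finite_image hj.injOn).to_subtype
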